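/- Let f be a Dirac comb of complexity γ on Z_N^d with coefficients from a known set {α_i} containing 0, with pairwise distances ≥ δ > 0 and moduli ≤ M. Suppose Σ_x |f(x)|² ≤ γ Σ_{x∈A_1} |f(x)|² for some A_1 ⊂ Z_N^d, and |A_1|·|S| < (N^d/(4γ))·(δ/M)². Then for every x, the partial Fourier sum I(x) = Σ_{m ∉ S} e^{2πi x·m/N} f̂(m) satisfies |f(x) − I(x)| < δ/2; consequently f(x) is the unique element of {α_i} within distance δ/2 of I(x), so f can be recovered from {f̂(m)}_{m ∉ S} by rounding. -/

import Mathlib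

open Finset

noncomputable def ft {N d : ℕ} [NeZero N] (f : (Fin d → ZMod N) → ℂ) (m : Fin d → ZMod N) : ℂ :=
  ((N : ℂ) ^ d)⁻¹ * ∑ x : Fin d → ZMod N,
    Complex.exp (-(2 * Real.pi * Complex.I * ((∑ i, x i * m i).val : ℂ) / N)) * f x

noncomputable def ch {N d : ℕ} (x m : Fin d → ZMod N) : ℂ :=
  Complex.exp (2 * Real.pi * Complex.I * ((∑ i, x i * m i).val : ℂ) / N)


noncomputable def ee {N : ℕ} [NeZero N] (k : ZMod N) : ℂ :=
  Complex.exp (2 * Real.pi * Complex.I * (k.val : ℂ) / N)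

lemma ee_zero {N : ℕ} [NeZero N] : ee (0 : ZMod N) = 1 := by simp [ee]

lemma ee_add {N : ℕ} [NeZero N] (a b : ZMod N) : ee (a + b) = ee a * ee b := by
  rw [ee, ee, ee, ← Complex.exp_add]
  have hN : (N : ℂ) ≠ 0 := Nat.cast_ne_zero.mpr (NeZero.ne N)
  have h : a.val + b.val = (a + b).val + N * ((a.val + b.val) / N) := by
    rw [ZMod.val_add]; exact (Nat.mod_add_div _ _).symm
  have h2 : ((a.val : ℂ) + b.val) = ((a+b).val : ℂ) + N * ((a.val + b.val) / N : ℕ) := by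
    exact_mod_cast congrArg (Nat.cast : ℕ → ℂ) h
  rw [show 2 * (Real.pi:ℂ) * Complex.I * (a.val : ℂ) / N + 2 * Real.pi * Complex.I * (b.val : ℂ) / N
      = 2 * Real.pi * Complex.I * (((a.val : ℂ) + b.val)) / N by ring, h2]
  rw [show 2 * (Real.pi:ℂ) * Complex.I * (((a+b).val : ℂ) + N * ((a.val + b.val) / N : ℕ)) / N
      = 2 * Real.pi * Complex.I * ((a+b).val : ℂ) / N + ((a.val + b.val) / N : ℕ) * (2 * Real.pi * Complex.I) by
        field_simp]
  rw [Complex.exp_add, Complex.exp_nat_mul_two_pi_mul_I, mul_one]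

lemma ee_neg {N : ℕ} [NeZero N] (a : ZMod N) : ee (-a) = (ee a)⁻¹ :=
  eq_inv_of_mul_eq_one_left (by rw [← ee_add, neg_add_cancel, ee_zero])

lemma ee_nsmul {N : ℕ} [NeZero N] (n : ℕ) (a : ZMod N) : ee (n • a) = ee a ^ n := by
  induction n with
  | zero => simpa using ee_zero
  | succ n ih => rw [succ_nsmul, ee_add, ih, pow_succ]

lemma ee_sum {N : ℕ} [NeZero N] {ι : Type*} (s : Finset ι) (g : ι → ZMod N) :
    ee (∑ i ∈ s, g i) = ∏ i ∈ s, ee (g i) := by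
  classical
  induction s using Finset.induction with
  | empty => simpa using ee_zero
  | insert _ _ h ih => rw [Finset.sum_insert h, Finset.prod_insert h, ee_add, ih]

lemma ee_pow_N {N : ℕ} [NeZero N] (a : ZMod N) : ee a ^ N = 1 := by
  rw [ee, ← Complex.exp_nat_mul]
  have hN : (N : ℂ) ≠ 0 := Nat.cast_ne_zero.mpr (NeZero.ne N)
  rw [show (N:ℂ) * (2 * Real.pi * Complex.I * (a.val : ℂ) / N) = (a.val : ℕ) * (2 * Real.pi * Complex.I) by field_simp]
  exact Complex.exp_nat_mul_two_pi_mul_I _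

lemma ee_ne_one {N : ℕ} [NeZero N] {a : ZMod N} (ha : a ≠ 0) : ee a ≠ 1 := by
  intro h
  rw [ee, Complex.exp_eq_one_iff] at h
  obtain ⟨n, hn⟩ := h
  have hN : (N : ℂ) ≠ 0 := Nat.cast_ne_zero.mpr (NeZero.ne N)
  have hπ : (2 * (Real.pi:ℂ) * Complex.I) ≠ 0 := by
    simp [Real.pi_ne_zero, Complex.I_ne_zero, two_ne_zero]
  have hv : (a.val : ℂ) = n * N := by
    have h3 : ((a.val : ℂ) / N) = n := by
      apply mul_left_cancel₀ hπ
      rw [mul_div_assoc] at hn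
      rw [hn]; ring
    rw [div_eq_iff hN] at h3
    exact h3
  have hvz : (a.val : ℤ) = n * N := by exact_mod_cast hv
  have hlt : (a.val : ℤ) < N := by exact_mod_cast ZMod.val_lt a
  have hge : (0:ℤ) ≤ (a.val : ℤ) := by positivity
  have hNz : (0:ℤ) < N := by exact_mod_cast Nat.pos_of_ne_zero (NeZero.ne N)
  have hn0 : n = 0 := by nlinarith
  rw [hn0, zero_mul] at hvz
  have : a.val = 0 := by exact_mod_cast hvz
  exact ha ((ZMod.val_eq_zero a).mp this)

lemma ee_geom {N : ℕ} [NeZero N] {c : ZMod N} (hc : c ≠ 0) :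
    ∑ t : ZMod N, ee (c * t) = 0 := by
  have h1 : ∀ t : ZMod N, ee (c * t) = ee c ^ t.val := by
    intro t
    rw [show c * t = t.val • c by rw [nsmul_eq_mul, ZMod.natCast_val, ZMod.cast_id, mul_comm],
      ee_nsmul]
  simp_rw [h1]
  have h2 : ∑ t : ZMod N, ee c ^ t.val = ∑ j ∈ Finset.range N, ee c ^ j := by
    refine Finset.sum_nbij' (fun t => t.val) (fun j => ((j : ℕ) : ZMod N)) ?_ ?_ ?_ ?_ ?_
    · intro t _; exact Finset.mem_range.mpr (ZMod.val_lt t)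
    · intro j _; exact Finset.mem_univ _
    · intro t _; simp [ZMod.natCast_val, ZMod.cast_id]
    · intro j hj; simp [ZMod.val_natCast_of_lt (Finset.mem_range.mp hj)]
    · intro t _; rfl
  rw [h2, geom_sum_eq (ee_ne_one hc), ee_pow_N, sub_self, zero_div]

lemma ee_full_sum {N : ℕ} [NeZero N] (c : ZMod N) :
    ∑ t : ZMod N, ee (c * t) = if c = 0 then (N : ℂ) else 0 := by
  by_cases hc : c = 0
  · simp [hc, ee_zero, Finset.card_univ, ZMod.card]
  · rw [if_neg hc, ee_geom hc]

lemma ch_eq {N d : ℕ} [NeZero N] (x m : Fin d → ZMod N) : ch x m = ee (∑ i, x i * m i) := rfl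

lemma exp_neg_eq {N : ℕ} [NeZero N] (c : ZMod N) :
    Complex.exp (-(2 * Real.pi * Complex.I * (c.val : ℂ) / N)) = ee (-c) := by
  rw [ee_neg, ee, ← Complex.exp_neg]

lemma ch_norm {N d : ℕ} [NeZero N] (x m : Fin d → ZMod N) : ‖ch x m‖ = 1 := by
  rw [ch, show (2 * (Real.pi:ℂ) * Complex.I * (((∑ i, x i * m i).val : ℕ) : ℂ) / N)
      = ((2 * Real.pi * (((∑ i, x i * m i).val : ℕ) : ℝ) / N : ℝ) : ℂ) * Complex.I by
        push_cast; ring]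
  exact Complex.norm_exp_ofReal_mul_I _

lemma inversion {N d : ℕ} [NeZero N] (f : (Fin d → ZMod N) → ℂ) (x : Fin d → ZMod N) :
    ∑ m : Fin d → ZMod N, ch x m * ft f m = f x := by
  classical
  have hN : (N : ℂ) ≠ 0 := Nat.cast_ne_zero.mpr (NeZero.ne N)
  have hNd : ((N : ℂ) ^ d) ≠ 0 := pow_ne_zero _ hN
  have key : ∀ m, ch x m * ft f m
      = ((N : ℂ) ^ d)⁻¹ * ∑ y, (∏ i, ee ((x i - y i) * m i)) * f y := by
    intro m
    rw [ft, ch_eq, ← mul_assoc, mul_comm (ee _) _, mul_assoc]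
    congr 1
    rw [Finset.mul_sum]
    refine Finset.sum_congr rfl fun y _ => ?_
    rw [exp_neg_eq, ← mul_assoc, ← ee_add]
    congr 2
    rw [← ee_sum]
    congr 1
    rw [← Finset.sum_neg_distrib, ← Finset.sum_add_distrib]
    exact Finset.sum_congr rfl fun i _ => by ring
  simp_rw [key]
  rw [← Finset.mul_sum, Finset.sum_comm]
  have inner : ∀ y : Fin d → ZMod N,
      ∑ m : Fin d → ZMod N, (∏ i, ee ((x i - y i) * m i)) * f y
        = (if x = y then (N : ℂ) ^ d else 0) * f y := by
    intro y
    rw [← Finset.sum_mul]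
    congr 1
    have h1 : ∑ m : Fin d → ZMod N, ∏ i, ee ((x i - y i) * m i)
        = ∏ i, ∑ t : ZMod N, ee ((x i - y i) * t) := by
      rw [Finset.prod_univ_sum]
      rw [Fintype.piFinset_univ]
    rw [h1]
    simp_rw [ee_full_sum]
    by_cases hxy : x = y
    · rw [if_pos hxy]
      subst hxy
      simp
    · rw [if_neg hxy]
      obtain ⟨i, hi⟩ := Function.ne_iff.mp hxy
      exact Finset.prod_eq_zero (Finset.mem_univ i) (by rw [if_neg (sub_ne_zero.mpr hi)])
  simp_rw [inner]
  rw [show (∑ y : Fin d → ZMod N, (if x = y then (N:ℂ) ^ d else 0) * f y) = (N:ℂ)^d * f x by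
    rw [Finset.sum_eq_single x]
    · rw [if_pos rfl]
    · intro y _ hy; rw [if_neg (Ne.symm hy), zero_mul]
    · intro h; exact absurd (Finset.mem_univ x) h]
  rw [← mul_assoc, inv_mul_cancel₀ hNd, one_mul]

lemma ft_norm {N d : ℕ} [NeZero N] (f : (Fin d → ZMod N) → ℂ) (m : Fin d → ZMod N) :
    ‖ft f m‖ ≤ ((N : ℝ) ^ d)⁻¹ * ∑ x : Fin d → ZMod N, ‖f x‖ := by
  rw [ft]
  rw [norm_mul]
  have h1 : ‖((N : ℂ) ^ d)⁻¹‖ = ((N : ℝ) ^ d)⁻¹ := by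
    rw [norm_inv, norm_pow, Complex.norm_natCast]
  rw [h1]
  gcongr
  refine (norm_sum_le _ _).trans ?_
  refine Finset.sum_le_sum fun y _ => ?_
  rw [norm_mul]
  have h2 : ‖Complex.exp (-(2 * Real.pi * Complex.I * (((∑ i, y i * m i).val : ℕ) : ℂ) / N))‖ = 1 := by
    rw [exp_neg_eq, ee_neg, norm_inv, show ee (∑ i, y i * m i) = ch y m from rfl, ch_norm, inv_one]
  rw [h2, one_mul]

theorem stmt12 {N d γ : ℕ} [NeZero N] (hγ : 0 < γ)
    (δ M : ℝ) (hδ : 0 < δ) (hM : 0 < M)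
    (α : Set ℂ) (h0 : (0 : ℂ) ∈ α)
    (hsep : ∀ z ∈ α, ∀ w ∈ α, z ≠ w → δ ≤ ‖z - w‖)
    (hbd : ∀ z ∈ α, ‖z‖ ≤ M)
    (a : Fin γ → ℂ) (A : Fin γ → Finset (Fin d → ZMod N))
    (ha : ∀ i, a i ∈ α)
    (hA : ∀ i j, i ≠ j → Disjoint (A i) (A j))
    (f : (Fin d → ZMod N) → ℂ)
    (hf : ∀ x, f x = ∑ i, if x ∈ A i then a i else 0)
    (A1 S : Finset (Fin d → ZMod N))
    (heff : ∑ x : Fin d → ZMod N, ‖f x‖ ^ 2 ≤ (γ : ℝ) * ∑ x ∈ A1, ‖f x‖ ^ 2)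
    (hrec : ((A1.card : ℝ)) * S.card < (N : ℝ) ^ d / (4 * γ) * (δ / M) ^ 2) :
    ∀ x : Fin d → ZMod N,
      ‖f x - ∑ m ∈ Sᶜ, ch x m * ft f m‖ < δ / 2 ∧
      (∀ z ∈ α, ‖z - ∑ m ∈ Sᶜ, ch x m * ft f m‖ < δ / 2 → z = f x) := by
  classical
  have hN0 : (0:ℝ) < (N:ℝ) := by exact_mod_cast Nat.pos_of_ne_zero (NeZero.ne N)
  have hNR : (0:ℝ) < (N:ℝ)^d := by positivity
  have hγR : (0:ℝ) < (γ:ℝ) := by exact_mod_cast hγ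
  have hfval : ∀ x, f x = 0 ∨ ∃ i, x ∈ A i ∧ f x = a i := by
    intro x
    by_cases hex : ∃ i, x ∈ A i
    · obtain ⟨i, hi⟩ := hex
      refine Or.inr ⟨i, hi, ?_⟩
      rw [hf]
      rw [Finset.sum_eq_single i]
      · rw [if_pos hi]
      · intro j _ hj
        rw [if_neg (fun hx => (Finset.disjoint_left.mp (hA j i hj)) hx hi)]
      · intro h; exact absurd (Finset.mem_univ i) h
    · push_neg at hex
      refine Or.inl ?_
      rw [hf]
      exact Finset.sum_eq_zero fun i _ => if_neg (hex i)
  have hfmem : ∀ x, f x ∈ α := by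
    intro x
    rcases hfval x with h | ⟨i, _, h⟩
    · rw [h]; exact h0
    · rw [h]; exact ha i
  have hfM : ∀ x, ‖f x‖ ≤ M := fun x => hbd _ (hfmem x)
  have hfδ : ∀ x, ‖f x‖ ≤ δ⁻¹ * ‖f x‖ ^ 2 := by
    intro x
    rcases eq_or_ne (f x) 0 with h | h
    · simp [h]
    · have h1 : δ ≤ ‖f x‖ := by
        simpa using hsep _ (hfmem x) _ h0 h
      rw [le_inv_mul_iff₀ hδ]
      nlinarith [norm_nonneg (f x)]
  have hA1b : ∑ x ∈ A1, ‖f x‖ ^ 2 ≤ (A1.card : ℝ) * M ^ 2 := by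
    calc ∑ x ∈ A1, ‖f x‖ ^ 2 ≤ ∑ _x ∈ A1, M ^ 2 :=
          Finset.sum_le_sum fun x _ => by nlinarith [hfM x, norm_nonneg (f x)]
      _ = (A1.card : ℝ) * M ^ 2 := by rw [Finset.sum_const, nsmul_eq_mul]
  have hsum : ∑ x : Fin d → ZMod N, ‖f x‖ ≤ δ⁻¹ * ((γ:ℝ) * ((A1.card : ℝ) * M ^ 2)) := by
    calc ∑ x : Fin d → ZMod N, ‖f x‖ ≤ ∑ x : Fin d → ZMod N, δ⁻¹ * ‖f x‖ ^ 2 :=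
          Finset.sum_le_sum fun x _ => hfδ x
      _ = δ⁻¹ * ∑ x : Fin d → ZMod N, ‖f x‖ ^ 2 := by rw [← Finset.mul_sum]
      _ ≤ δ⁻¹ * ((γ:ℝ) * ∑ x ∈ A1, ‖f x‖ ^ 2) := by
          apply mul_le_mul_of_nonneg_left heff (by positivity)
      _ ≤ δ⁻¹ * ((γ:ℝ) * ((A1.card : ℝ) * M ^ 2)) := by
          apply mul_le_mul_of_nonneg_left _ (by positivity)
          exact mul_le_mul_of_nonneg_left hA1b (by positivity)
  have hftb : ∀ m, ‖ft f m‖ ≤ ((N:ℝ)^d)⁻¹ * (δ⁻¹ * ((γ:ℝ) * ((A1.card : ℝ) * M ^ 2))) := by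
    intro m
    refine (ft_norm f m).trans ?_
    exact mul_le_mul_of_nonneg_left hsum (by positivity)
  intro x
  have hdiff : f x - ∑ m ∈ Sᶜ, ch x m * ft f m = ∑ m ∈ S, ch x m * ft f m := by
    rw [← inversion f x, ← Finset.sum_compl_add_sum S (fun m => ch x m * ft f m)]
    ring
  have hnorm : ‖∑ m ∈ S, ch x m * ft f m‖
      ≤ (S.card : ℝ) * (((N:ℝ)^d)⁻¹ * (δ⁻¹ * ((γ:ℝ) * ((A1.card : ℝ) * M ^ 2)))) := by
    refine (norm_sum_le _ _).trans ?_
    calc ∑ m ∈ S, ‖ch x m * ft f m‖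
        ≤ ∑ _m ∈ S, ((N:ℝ)^d)⁻¹ * (δ⁻¹ * ((γ:ℝ) * ((A1.card : ℝ) * M ^ 2))) :=
          Finset.sum_le_sum fun m _ => by rw [norm_mul, ch_norm, one_mul]; exact hftb m
      _ = (S.card : ℝ) * _ := by rw [Finset.sum_const, nsmul_eq_mul]
  have hmain : ‖f x - ∑ m ∈ Sᶜ, ch x m * ft f m‖ < δ / 2 := by
    rw [hdiff]
    refine lt_of_le_of_lt hnorm ?_
    have key : (A1.card:ℝ) * S.card * ((γ:ℝ) * M^2 / (δ * (N:ℝ)^d))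
        < ((N:ℝ)^d / (4*γ) * (δ/M)^2) * ((γ:ℝ) * M^2 / (δ * (N:ℝ)^d)) :=
      mul_lt_mul_of_pos_right hrec (by positivity)
    have e1 : (S.card : ℝ) * (((N:ℝ)^d)⁻¹ * (δ⁻¹ * ((γ:ℝ) * ((A1.card : ℝ) * M ^ 2))))
        = (A1.card:ℝ) * S.card * ((γ:ℝ) * M^2 / (δ * (N:ℝ)^d)) := by
      field_simp
    have e2 : ((N:ℝ)^d / (4*γ) * (δ/M)^2) * ((γ:ℝ) * M^2 / (δ * (N:ℝ)^d)) = δ / 4 := by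
      field_simp
    rw [e1]
    rw [e2] at key
    linarith
  refine ⟨hmain, ?_⟩
  intro z hz hzn
  by_contra hne
  have h1 : δ ≤ ‖z - f x‖ := hsep z hz (f x) (hfmem x) hne
  have h2 : ‖z - f x‖ ≤ ‖z - ∑ m ∈ Sᶜ, ch x m * ft f m‖ + ‖f x - ∑ m ∈ Sᶜ, ch x m * ft f m‖ := by
    have h3 : z - f x = (z - ∑ m ∈ Sᶜ, ch x m * ft f m) - (f x - ∑ m ∈ Sᶜ, ch x m * ft f m) := by
      ring
    rw [h3]
    exact norm_sub_le _ _
  linarith
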